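/- If D and E are commuting symmetric positive definite d×d matrices with D - E positive definite (D > E), then U(τ) = cosh(Dτ) - D⁻¹ sinh(Dτ) E is invertible for all τ ≥ 0. -/

import Mathlib

/-!
With `A = τ • D`, commutativity gives
`cosh A - D⁻¹ sinh A E = exp (-A) + D⁻¹ sinh A (D - E)`.
The exponential of the symmetric matrix `-A` is positive definite, being the square of the
symmetric invertible matrix `exp (-A / 2)`. The second summand is positive semidefinite because
its series has terms `τ^(2k+1) / (2k+1)! • D^k (D - E) D^k`. A positive definite matrix plus a
positive semidefinite one is positive definite, hence invertible.
-/

open Matrix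

/-- Matrix hyperbolic cosine, defined by its power series `∑ A^(2k)/(2k)!`. -/
noncomputable def mcosh {d : ℕ} (A : Matrix (Fin d) (Fin d) ℝ) : Matrix (Fin d) (Fin d) ℝ :=
  ∑' k : ℕ, (((2 * k).factorial : ℝ))⁻¹ • A ^ (2 * k)

/-- Matrix hyperbolic sine, defined by its power series `∑ A^(2k+1)/(2k+1)!`. -/
noncomputable def msinh {d : ℕ} (A : Matrix (Fin d) (Fin d) ℝ) : Matrix (Fin d) (Fin d) ℝ :=
  ∑' k : ℕ, (((2 * k + 1).factorial : ℝ))⁻¹ • A ^ (2 * k + 1)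

open scoped ComplexOrder

namespace Matrix

variable {n : Type*} [Fintype n]

lemma nonsing_inv_mul_odd_pow_mul [DecidableEq n] {α : Type*} [CommRing α]
    {D M : Matrix n n α} (hD : IsUnit D.det) (hDM : Commute D M) (k : ℕ) :
    D⁻¹ * D ^ (2 * k + 1) * M = D ^ k * M * D ^ k := by
  rw [pow_succ', nonsing_inv_mul_cancel_left _ _ hD, two_mul, pow_add, mul_assoc, mul_assoc,
    (hDM.pow_left k).eq]

variable {𝕜 : Type*} [RCLike 𝕜]

lemma PosSemidef.tsum {ι : Type*} {f : ι → Matrix n n 𝕜} (hf : Summable f)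
    (h : ∀ i, (f i).PosSemidef) : (∑' i, f i).PosSemidef := by
  refine .of_dotProduct_mulVec_nonneg ?_ fun x => ?_
  · rw [IsHermitian, conjTranspose_tsum]
    exact tsum_congr fun i => (h i).1
  · let q : Matrix n n 𝕜 →+ 𝕜 := AddMonoidHom.mk' (fun M => star x ⬝ᵥ M *ᵥ x)
      fun M N => by simp only [add_mulVec, dotProduct_add]
    have hq : Continuous q :=
      continuous_const.dotProduct (continuous_id.matrix_mulVec continuous_const)
    change 0 ≤ q (∑' i, f i)
    rw [← (hf.hasSum.map q hq).tsum_eq]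
    exact tsum_nonneg fun i => (h i).dotProduct_mulVec_nonneg x

lemma IsHermitian.posDef_exp [DecidableEq n] {A : Matrix n n 𝕜} (hA : A.IsHermitian) :
    (NormedSpace.exp A).PosDef := by
  set B := NormedSpace.exp ((2⁻¹ : ℝ) • A)
  have hB : Bᴴ = B := (hA.smul (IsSelfAdjoint.all _)).exp
  have hAB : NormedSpace.exp A = Bᴴ * B := by
    rw [hB, ← exp_add_of_commute _ _ (Commute.refl _), ← add_smul]
    norm_num
  rw [hAB]
  exact .conjTranspose_mul_self B (mulVec_injective_iff_isUnit.mpr (isUnit_exp _))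

end Matrix

open NormedSpace

variable {d : ℕ}

lemma hasSum_mcosh (A : Matrix (Fin d) (Fin d) ℝ) :
    HasSum (fun k : ℕ => (((2 * k).factorial : ℝ))⁻¹ • A ^ (2 * k)) (mcosh A) :=
  open scoped Matrix.Norms.Operator in
  ((expSeries_summable' (𝕂 := ℝ) A).comp_injective fun _ _ h => by omega).hasSum

lemma hasSum_msinh (A : Matrix (Fin d) (Fin d) ℝ) :
    HasSum (fun k : ℕ => (((2 * k + 1).factorial : ℝ))⁻¹ • A ^ (2 * k + 1)) (msinh A) :=
  open scoped Matrix.Norms.Operator in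
  ((expSeries_summable' (𝕂 := ℝ) A).comp_injective fun _ _ h => by omega).hasSum

lemma exp_neg_eq_mcosh_sub_msinh (A : Matrix (Fin d) (Fin d) ℝ) :
    exp (-A) = mcosh A - msinh A := by
  have hEven := hasSum_mcosh A
  have hOdd := (hasSum_msinh A).neg
  simp_rw [← (even_two_mul _).neg_pow A] at hEven
  simp_rw [← smul_neg, ← (odd_two_mul_add_one _).neg_pow A] at hOdd
  have hExp := HasSum.even_add_odd (f := fun n => (n.factorial : ℝ)⁻¹ • (-A) ^ n) hEven hOdd
  rw [exp_eq_tsum ℝ, sub_eq_add_neg]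
  exact hExp.tsum_eq

lemma Commute.msinh_right {B A : Matrix (Fin d) (Fin d) ℝ} (h : Commute B A) :
    Commute B (msinh A) :=
  .tsum_right _ fun _ => (h.pow_right _).smul_right _

lemma posSemidef_inv_mul_msinh_smul_mul {D M : Matrix (Fin d) (Fin d) ℝ} (hD : D.IsHermitian)
    (hDdet : IsUnit D.det) (hM : M.PosSemidef) (hDM : Commute D M) {τ : ℝ} (hτ : 0 ≤ τ) :
    (D⁻¹ * msinh (τ • D) * M).PosSemidef := by
  have hSeries : HasSum
      (fun k : ℕ => (τ ^ (2 * k + 1) / (2 * k + 1).factorial) • (D ^ k * M * D ^ k))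
      (D⁻¹ * msinh (τ • D) * M) := by
    refine (((hasSum_msinh (τ • D)).mul_left D⁻¹).mul_right M).congr_fun fun k => ?_
    rw [smul_pow, smul_smul, mul_smul_comm, smul_mul_assoc,
      nonsing_inv_mul_odd_pow_mul hDdet hDM, div_eq_inv_mul]
  have hTerm (k : ℕ) : (D ^ k * M * D ^ k).PosSemidef := by
    simpa only [conjTranspose_pow, hD.eq] using hM.mul_mul_conjTranspose_same (D ^ k)
  exact hSeries.tsum_eq ▸ .tsum hSeries.summable fun k => (hTerm k).smul (by positivity)

theorem U_invertible_of_D_gt_E_general {d : ℕ} (D E : Matrix (Fin d) (Fin d) ℝ)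
    (hD : D.PosDef) (hcomm : D * E = E * D) (hDE : (D - E).PosDef)
    (τ : ℝ) (hτ : 0 ≤ τ) :
    IsUnit (mcosh (τ • D) - D⁻¹ * msinh (τ • D) * E) := by
  have hDdet : IsUnit D.det := (isUnit_iff_isUnit_det D).mp hD.isUnit
  have hDsinh : Commute D (msinh (τ • D)) := ((Commute.refl D).smul_right τ).msinh_right
  have hU : mcosh (τ • D) - D⁻¹ * msinh (τ • D) * E
      = exp (-(τ • D)) + D⁻¹ * msinh (τ • D) * (D - E) := by
    rw [exp_neg_eq_mcosh_sub_msinh, Matrix.mul_sub, Matrix.mul_assoc D⁻¹ _ D, ← hDsinh.eq,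
      nonsing_inv_mul_cancel_left _ _ hDdet]
    abel
  have hExp : (exp (-(τ • D))).PosDef :=
    (hD.isHermitian.smul (IsSelfAdjoint.all τ)).neg.posDef_exp
  have hSinh : (D⁻¹ * msinh (τ • D) * (D - E)).PosSemidef :=
    posSemidef_inv_mul_msinh_smul_mul hD.isHermitian hDdet hDE.posSemidef
      ((Commute.refl D).sub_right hcomm) hτ
  rw [hU]
  exact (hExp.add_posSemidef hSinh).isUnit

/-- If `D` and `E` are commuting symmetric positive definite matrices with `D - E`
positive definite, then `U(τ) = cosh(Dτ) - D⁻¹ sinh(Dτ) E` is invertible for all `τ ≥ 0`. -/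
theorem U_invertible_of_D_gt_E {d : ℕ} (D E : Matrix (Fin d) (Fin d) ℝ)
    (hD : D.PosDef) (hE : E.PosDef) (hcomm : D * E = E * D) (hDE : (D - E).PosDef)
    (τ : ℝ) (hτ : 0 ≤ τ) :
    IsUnit (mcosh (τ • D) - D⁻¹ * msinh (τ • D) * E) :=
  U_invertible_of_D_gt_E_general D E hD hcomm hDE τ hτ
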